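/- arXiv:2512.16665 — 2 statements merged into one kernel-verified Lean document; each statement's English description precedes it below -/
import Mathlib

section
/- Fix integers M ≥ 2 and k ≥ 1. For n ≥ k define T(n) := min { t ∈ ℕ : ∑_{l=0}^{t} C(n,l)(M-1)^l > M^{n-k} } (the minimum exists since the full sum at t = n equals M^n > M^{n-k}). Then T is monotonically increasing: for all n ≥ k, T(n+1) ≥ T(n). -/
/-- M-ary Hamming ball volume `V n t = ∑_{l=0}^t C(n,l)(M-1)^l`. -/
def hammingBallVol (M n t : ℕ) : ℕ :=
  ∑ l ∈ Finset.range (t + 1), Nat.choose n l * (M - 1) ^ l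

/-- `T n` = least `t` with `V_n(t) > M^(n-k)`. -/
noncomputable def hammingRadius (M k n : ℕ) : ℕ :=
  sInf {t : ℕ | M ^ (n - k) < hammingBallVol M n t}

/-!
Pascal's rule gives `V_{n+1}(t) ≤ M · V_n(t)`, while `M^{n+1-k} = M · M^{n-k}`. Hence every radius
admissible at blocklength `n + 1` is admissible at `n`, and the least admissible radius can only grow.
The admissible set at `n + 1` is nonempty because `V_{n+1}(n+1) = M^{n+1} > M^{n+1-k}`.
-/

section HammingBall

variable {M : ℕ}

theorem hammingBallVol_self (hM : 1 ≤ M) (n : ℕ) : hammingBallVol M n n = M ^ n := by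
  rw [hammingBallVol, ← Nat.sub_add_cancel hM, add_pow]
  simp only [one_pow, one_mul, Nat.add_sub_cancel, Nat.cast_id, mul_comm]

theorem hammingBallVol_succ_le (hM : 1 ≤ M) (n t : ℕ) :
    hammingBallVol M (n + 1) t ≤ M * hammingBallVol M n t := by
  have pascal : hammingBallVol M (n + 1) t = hammingBallVol M n t +
      (M - 1) * ∑ l ∈ Finset.range t, n.choose l * (M - 1) ^ l := by
    have step (l : ℕ) : (n + 1).choose (l + 1) * (M - 1) ^ (l + 1) =
        n.choose (l + 1) * (M - 1) ^ (l + 1) + (M - 1) * (n.choose l * (M - 1) ^ l) := by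
      rw [Nat.choose_succ_succ']; ring
    simp only [hammingBallVol, Finset.sum_range_succ' _ t, step, Finset.sum_add_distrib,
      ← Finset.mul_sum, Nat.choose_zero_right]
    ring
  have shorter : ∑ l ∈ Finset.range t, n.choose l * (M - 1) ^ l ≤ hammingBallVol M n t :=
    Finset.sum_le_sum_of_subset (Finset.range_subset_range.2 t.le_succ)
  calc hammingBallVol M (n + 1) t ≤ hammingBallVol M n t + (M - 1) * hammingBallVol M n t := by
        rw [pascal]; gcongr
    _ = (M - 1 + 1) * hammingBallVol M n t := by ring
    _ = M * hammingBallVol M n t := by rw [Nat.sub_add_cancel hM]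

theorem pow_sub_lt_hammingBallVol_self (hM : 2 ≤ M) {k n : ℕ} (hk : 1 ≤ k) (hn : k ≤ n) :
    M ^ (n - k) < hammingBallVol M n n := by
  rw [hammingBallVol_self (by omega)]
  exact Nat.pow_lt_pow_right hM (by omega)

theorem hammingRadius_set_succ_subset (hM : 1 ≤ M) {k n : ℕ} (hn : k ≤ n) :
    {t | M ^ (n + 1 - k) < hammingBallVol M (n + 1) t} ⊆
      {t | M ^ (n - k) < hammingBallVol M n t} := by
  intro t ht
  have hpow : M ^ (n + 1 - k) = M * M ^ (n - k) := by
    rw [Nat.sub_add_comm hn, pow_succ']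
  have : M * M ^ (n - k) < M * hammingBallVol M n t :=
    hpow ▸ ht.trans_le (hammingBallVol_succ_le hM n t)
  exact Nat.lt_of_mul_lt_mul_left this

end HammingBall

theorem stmt_2 (M k : ℕ) (hM : 2 ≤ M) (hk : 1 ≤ k) :
    ∀ n : ℕ, k ≤ n → hammingRadius M k n ≤ hammingRadius M k (n + 1) := by
  intro n hn
  exact csInf_le_csInf' ⟨n + 1, pow_sub_lt_hammingBallVol_self hM hk (by omega)⟩
    (hammingRadius_set_succ_subset (by omega) hn)
end

section
/- Let M ≥ 2 be an integer, 0 < δ < (M-1)/M, and n a positive natural number such that δn is a natural number. Then the Hamming ball volume satisfies (1/(n+1)) · M^{n·H_M(δ)} ≤ ∑_{l=0}^{δn} C(n,l)(M-1)^l, where H_M(δ) = δ·log_M(M-1) − δ·log_M(δ) − (1−δ)·log_M(1−δ) is the M-ary entropy function. -/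
/-! For `δ = m / n`, the binomial expansion of `1 = (δ + (1 - δ))ⁿ` has `n + 1` terms, the largest
being the one of index `m` (the mode of the binomial distribution), so
`C(n, m) δᵐ (1 - δ)ⁿ⁻ᵐ ≥ 1 / (n + 1)`. Since `M ^ (n H_M(δ)) = (M - 1)ᵐ / (δᵐ (1 - δ)ⁿ⁻ᵐ)`, this
bounds the single term `C(n, m) (M - 1)ᵐ` of the ball volume from below. -/

/-- The M-ary entropy function. -/
noncomputable def maryEntropy (M : ℕ) (δ : ℝ) : ℝ :=
  δ * Real.logb M (M - 1) - δ * Real.logb M δ - (1 - δ) * Real.logb M (1 - δ)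

theorem Nat.apply_le_of_le_succ_of_succ_le {α : Type*} [Preorder α] {f : ℕ → α} {m : ℕ}
    (hup : ∀ k < m, f k ≤ f (k + 1)) (hdown : ∀ k ≥ m, f (k + 1) ≤ f k) (k : ℕ) :
    f k ≤ f m := by
  rcases le_total k m with hkm | hmk
  · induction hkm using Nat.decreasingInduction with
    | self => rfl
    | of_succ j hj ih => exact (hup j hj).trans ih
  · induction k, hmk using Nat.le_induction with
    | base => rfl
    | succ j hj ih => exact (hdown j hj).trans ih

theorem choose_succ_mul_pow_mul_pow {R : Type*} [CommSemiring R] (a b : R) {n k : ℕ}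
    (hk : k < n) :
    (n.choose (k + 1) : R) * a ^ (k + 1) * b ^ (n - (k + 1)) * ((k + 1) * b) =
      n.choose k * a ^ k * b ^ (n - k) * ((n - k : ℕ) * a) := by
  have hchoose : (n.choose (k + 1) : R) * (k + 1) = n.choose k * (n - k : ℕ) := by
    exact_mod_cast congrArg (Nat.cast (R := R)) (Nat.choose_succ_right_eq n k)
  have hpow : b ^ (n - k) = b ^ (n - (k + 1)) * b := by rw [← pow_succ]; congr 1; omega
  calc (n.choose (k + 1) : R) * a ^ (k + 1) * b ^ (n - (k + 1)) * ((k + 1) * b)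
      = (n.choose (k + 1) * (k + 1)) * a ^ k * (b ^ (n - (k + 1)) * b) * a := by ring
    _ = n.choose k * a ^ k * b ^ (n - k) * ((n - k : ℕ) * a) := by rw [hchoose, hpow]; ring

section OrderedRing

variable {R : Type*} [CommRing R] [LinearOrder R] [IsStrictOrderedRing R]

theorem choose_mul_pow_mul_pow_le {n m : ℕ} {a b : R} (ha : 0 < a) (hb : 0 < b) (hmn : m ≤ n)
    (hab : m * b = (n - m) * a) (k : ℕ) :
    n.choose k * a ^ k * b ^ (n - k) ≤ n.choose m * a ^ m * b ^ (n - m) := by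
  set f : ℕ → R := fun k ↦ n.choose k * a ^ k * b ^ (n - k)
  -- Consecutive terms have ratio `(n - k) a / ((k + 1) b)`, which is `≥ 1` exactly when `k < m`.
  have hf : ∀ k < n, f (k + 1) * ((k + 1) * b) = f k * ((n - k) * a) := by
    intro k hk
    simpa [f, Nat.cast_sub hk.le] using choose_succ_mul_pow_mul_pow a b hk
  have hf0 : ∀ k, 0 ≤ f k := fun k ↦ by positivity
  refine Nat.apply_le_of_le_succ_of_succ_le (f := f) (fun k hk ↦ ?_) (fun k hk ↦ ?_) k
  · have hkn : (k : R) < n := by exact_mod_cast hk.trans_le hmn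
    have hkm : (k : R) + 1 ≤ m := by exact_mod_cast hk
    refine le_of_mul_le_mul_right ?_ (mul_pos (sub_pos.2 hkn) ha)
    rw [← hf k (hk.trans_le hmn)]
    refine mul_le_mul_of_nonneg_left ?_ (hf0 _)
    nlinarith
  · rcases lt_or_ge k n with hkn | hnk
    · have hkm : (m : R) ≤ k := by exact_mod_cast hk
      refine le_of_mul_le_mul_right ?_ (mul_pos (by positivity : (0 : R) < k + 1) hb)
      rw [hf k hkn]
      refine mul_le_mul_of_nonneg_left ?_ (hf0 _)
      nlinarith
    · simp only [f, Nat.choose_eq_zero_of_lt (Nat.lt_succ_of_le hnk), Nat.cast_zero, zero_mul]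
      exact hf0 k

theorem add_pow_le_succ_mul_choose_mul_pow_mul_pow {n m : ℕ} {a b : R} (ha : 0 < a) (hb : 0 < b)
    (hmn : m ≤ n) (hab : m * b = (n - m) * a) :
    (a + b) ^ n ≤ (n + 1) * (n.choose m * a ^ m * b ^ (n - m)) := by
  rw [add_pow]
  calc ∑ k ∈ Finset.range (n + 1), a ^ k * b ^ (n - k) * n.choose k
      ≤ ∑ _k ∈ Finset.range (n + 1), n.choose m * a ^ m * b ^ (n - m) := by
        refine Finset.sum_le_sum fun k _ ↦ ?_
        linarith [choose_mul_pow_mul_pow_le ha hb hmn hab k]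
    _ = _ := by simp

end OrderedRing

theorem rpow_mul_maryEntropy {M n m : ℕ} {δ : ℝ} (hM : 2 ≤ M) (hδ0 : 0 < δ) (hδ1 : δ < 1)
    (hmn : m ≤ n) (hm : (m : ℝ) = δ * n) :
    (M : ℝ) ^ ((n : ℝ) * maryEntropy M δ) = ((M : ℝ) - 1) ^ m / (δ ^ m * (1 - δ) ^ (n - m)) := by
  have hM' : (2 : ℝ) ≤ M := by exact_mod_cast hM
  have hM1 : (0 : ℝ) < M - 1 := by linarith
  have h1δ : 0 < 1 - δ := by linarith
  have hlog : (n : ℝ) * maryEntropy M δ =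
      Real.logb M (((M : ℝ) - 1) ^ m / (δ ^ m * (1 - δ) ^ (n - m))) := by
    rw [Real.logb_div (by positivity) (by positivity), Real.logb_mul (by positivity)
      (by positivity), Real.logb_pow, Real.logb_pow, Real.logb_pow, Nat.cast_sub hmn, hm,
      maryEntropy]
    ring
  rw [hlog, Real.rpow_logb (by positivity) (by linarith) (by positivity)]

theorem stmt_4_general (M n m : ℕ) (δ : ℝ) (hM : 2 ≤ M)
    (hδ0 : 0 < δ) (hδ1 : δ < (M - 1 : ℝ) / M) (hm : (m : ℝ) = δ * n) :
    (1 / (n + 1 : ℝ)) * (M : ℝ) ^ ((n : ℝ) * maryEntropy M δ) ≤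
      ∑ l ∈ Finset.range (m + 1), (Nat.choose n l : ℝ) * ((M : ℝ) - 1) ^ l := by
  have hδ1' : δ < 1 := hδ1.trans_le <| div_le_one_of_le₀ (by linarith) (Nat.cast_nonneg M)
  have hmn : m ≤ n := by
    have : (m : ℝ) ≤ n := by rw [hm]; exact mul_le_of_le_one_left n.cast_nonneg hδ1'.le
    exact_mod_cast this
  have hmode : 1 ≤ (n + 1) * (n.choose m * δ ^ m * (1 - δ) ^ (n - m)) := by
    simpa using add_pow_le_succ_mul_choose_mul_pow_mul_pow hδ0 (sub_pos.2 hδ1') hmn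
      (by rw [hm]; ring)
  have hD : 0 < δ ^ m * (1 - δ) ^ (n - m) := mul_pos (pow_pos hδ0 m) (pow_pos (sub_pos.2 hδ1') _)
  have hM1 : (0 : ℝ) ≤ M - 1 := by linarith [show (2 : ℝ) ≤ M by exact_mod_cast hM]
  calc (1 / (n + 1 : ℝ)) * (M : ℝ) ^ ((n : ℝ) * maryEntropy M δ)
      = ((M : ℝ) - 1) ^ m / (δ ^ m * (1 - δ) ^ (n - m) * (n + 1)) := by
        rw [rpow_mul_maryEntropy hM hδ0 hδ1' hmn hm, one_div_mul_eq_div, div_div]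
    _ ≤ n.choose m * ((M : ℝ) - 1) ^ m := by
        rw [div_le_iff₀ (mul_pos hD n.cast_add_one_pos)]
        calc ((M : ℝ) - 1) ^ m
            ≤ (n + 1) * (n.choose m * δ ^ m * (1 - δ) ^ (n - m)) * ((M : ℝ) - 1) ^ m :=
              le_mul_of_one_le_left (pow_nonneg hM1 m) hmode
          _ = _ := by ring
    _ ≤ ∑ l ∈ Finset.range (m + 1), (n.choose l : ℝ) * ((M : ℝ) - 1) ^ l :=
        Finset.single_le_sum (f := fun l ↦ (n.choose l : ℝ) * ((M : ℝ) - 1) ^ l)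
          (fun l _ ↦ mul_nonneg (n.choose l).cast_nonneg (pow_nonneg hM1 l))
          (Finset.self_mem_range_succ m)

theorem stmt_4 (M n m : ℕ) (δ : ℝ) (hM : 2 ≤ M) (hn : 1 ≤ n)
    (hδ0 : 0 < δ) (hδ1 : δ < (M - 1 : ℝ) / M) (hm : (m : ℝ) = δ * n) :
    (1 / (n + 1 : ℝ)) * (M : ℝ) ^ ((n : ℝ) * maryEntropy M δ) ≤
      ∑ l ∈ Finset.range (m + 1), (Nat.choose n l : ℝ) * ((M : ℝ) - 1) ^ l :=
  stmt_4_general M n m δ hM hδ0 hδ1 hm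
end
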